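/- Let G be a finite graph and r, s ≥ 1. If Splitter has a winning strategy for the (r,s)-splitter game on G, then Splitter has a winning strategy for the modified (r,s)-splitter game on G, in which in each round Connector picks both a vertex v of the current graph G_i and a radius r' ≤ r, Splitter answers with a vertex w ∈ N_{r'}^{G_i}(v), and the game continues on G_{i+1} = G_i[N_{r'}^{G_i}(v) ∖ {w}], with Splitter winning a play as soon as the current graph is empty within s rounds. -/

import Mathlib

/-- `splitterWin r s V G` holds iff Splitter has a winning strategy for the
`(r,s)`-splitter game on `G`: either `G` has no vertices, or `s ≥ 1` and for every
vertex `v` that Connector may pick, Splitter can answer with some `w` in the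
`r`-neighbourhood of `v` such that she wins the `(r, s-1)`-game on the subgraph
induced on `N_r(v) \ {w}`. -/
def splitterWin (r : ℕ) : ℕ → (V : Type) → SimpleGraph V → Prop
  | 0, V, _ => IsEmpty V
  | s + 1, V, G =>
      IsEmpty V ∨ ∀ v : V, ∃ w : V, G.edist w v ≤ (r : ℕ∞) ∧
        splitterWin r s {u : V // G.edist u v ≤ (r : ℕ∞) ∧ u ≠ w}
          (G.induce {u : V | G.edist u v ≤ (r : ℕ∞) ∧ u ≠ w})

/-- Splitter's winning condition for the modified `(r,s)`-splitter game, in which in each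
round Connector picks a vertex `v` of the current graph together with a radius `r' ≤ r`,
Splitter answers with a vertex `w ∈ N_{r'}(v)`, and the game continues on the subgraph
induced on `N_{r'}(v) \ {w}`. -/
def splitterWinMod (r : ℕ) : ℕ → (V : Type) → SimpleGraph V → Prop
  | 0, V, _ => IsEmpty V
  | s + 1, V, G =>
      IsEmpty V ∨ ∀ (v : V) (r' : ℕ), r' ≤ r →
        ∃ w : V, G.edist w v ≤ (r' : ℕ∞) ∧
          splitterWinMod r s {u : V // G.edist u v ≤ (r' : ℕ∞) ∧ u ≠ w}
            (G.induce {u : V | G.edist u v ≤ (r' : ℕ∞) ∧ u ≠ w})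

/-
Splitter's winning positions are closed under taking subgraphs: if `G'` embeds into `G`, she
answers Connector's move `v'` in `G'` by pulling back her answer `w` to Connector's move `f v'`
in `G`; when `w` has no preimage in the ball around `v'` she removes `v'` itself. The remaining
ball in `G'` then embeds into the remaining ball in `G`, since graph homomorphisms do not
increase distances. A ball of radius `r' ≤ r` is a subgraph of the ball of radius `r`, so
the same answer wins the modified game as well.
-/

open Function Set

namespace SimpleGraph

variable {V V' : Type} {G : SimpleGraph V} {G' : SimpleGraph V'}

lemma Hom.edist_le (f : G →g G') (u v : V) : G'.edist (f u) (f v) ≤ G.edist u v := by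
  rw [edist_eq_sInf (G := G)]
  refine le_sInf ?_
  rintro _ ⟨p, rfl⟩
  simpa using (p.map f).edist_le

def Embedding.induceRestrict (f : G' ↪g G) {A' : Set V'} {A : Set V} (h : MapsTo f A' A) :
    G'.induce A' ↪g G.induce A where
  toFun := h.restrict f A' A
  inj' := (MapsTo.restrict_inj h).2 f.injective.injOn
  map_rel_iff' := f.map_rel_iff'

end SimpleGraph

lemma Set.exists_mapsTo_diff_singleton {α β : Type} {f : α → β} (hf : Injective f)
    {A' : Set α} {A : Set β} (h : MapsTo f A' A) {v' : α} (hv' : v' ∈ A') (w : β) :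
    ∃ w' ∈ A', MapsTo f (A' \ {w'}) (A \ {w}) := by
  by_cases hw : ∃ w' ∈ A', f w' = w
  · obtain ⟨w', hw'A, rfl⟩ := hw
    exact ⟨w', hw'A, fun u hu => ⟨h hu.1, fun hfu => hu.2 (hf hfu)⟩⟩
  · exact ⟨v', hv', fun u hu => ⟨h hu.1, fun hfu => hw ⟨u, hu.1, hfu⟩⟩⟩

open SimpleGraph

theorem splitterWin.of_embedding {r : ℕ} :
    ∀ {s : ℕ} {V V' : Type} {G : SimpleGraph V} {G' : SimpleGraph V'},
      splitterWin r s V G → (G' ↪g G) → splitterWin r s V' G'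
  | 0, _, _, _, _, h, f => @Function.isEmpty _ _ h f
  | _ + 1, _, _, _, _, .inl h, f => .inl (@Function.isEmpty _ _ h f)
  | _ + 1, _, _, G, G', .inr h, f => .inr fun v' => by
    obtain ⟨w, -, hwin⟩ := h (f v')
    have hball : MapsTo f {u | G'.edist u v' ≤ r} {u | G.edist u (f v') ≤ r} :=
      fun u hu => (f.toHom.edist_le u v').trans hu
    obtain ⟨w', hw', hmaps⟩ :=
      exists_mapsTo_diff_singleton f.injective hball (v' := v') (by simp) w
    exact ⟨w', hw', hwin.of_embedding (f.induceRestrict hmaps)⟩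

theorem splitterWin.splitterWinMod {r : ℕ} :
    ∀ {s : ℕ} {V : Type} {G : SimpleGraph V}, splitterWin r s V G → splitterWinMod r s V G
  | 0, _, _, h => h
  | _ + 1, _, _, .inl h => .inl h
  | _ + 1, _, G, .inr h => .inr fun v r' hr' => by
    obtain ⟨w, -, hwin⟩ := h v
    have hball : MapsTo id {u | G.edist u v ≤ r'} {u | G.edist u v ≤ r} :=
      fun _ hu => le_trans (α := ℕ∞) hu (by exact_mod_cast hr')
    obtain ⟨w', hw', hmaps⟩ :=
      exists_mapsTo_diff_singleton injective_id hball (v' := v) (by simp) w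
    exact ⟨w', hw', (hwin.of_embedding (G.induceHomOfLE hmaps)).splitterWinMod⟩

theorem stmt_12_general {V : Type} (G : SimpleGraph V) (r s : ℕ)
    (hwin : splitterWin r s V G) :
    splitterWinMod r s V G :=
  hwin.splitterWinMod

/-- If Splitter wins the `(r,s)`-splitter game on a finite graph `G`,
then she also wins the modified `(r,s)`-splitter game on `G`, where Connector additionally
picks a radius `r' ≤ r` in each round. -/
theorem stmt_12 {V : Type} [Fintype V] (G : SimpleGraph V) (r s : ℕ)
    (hr : 1 ≤ r) (hs : 1 ≤ s) (hwin : splitterWin r s V G) :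
    splitterWinMod r s V G :=
  stmt_12_general G r s hwin
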